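/- arXiv:1703.03143 — 5 statements merged into one kernel-verified Lean document; each statement's English description precedes it below -/
import Mathlib

section
/- Every ring R with zero multiplication is equationally Noetherian: every system of equations over R (in the ring language with constants from R, in finitely many variables) is equivalent over R to some finite subsystem. -/
/-- Terms of the ring language {+, -, ·, 0} with constants from `R`. -/
inductive RTerm (R : Type) (n : ℕ) where
  | var : Fin n → RTerm R n
  | const : R → RTerm R n
  | zero : RTerm R n
  | add : RTerm R n → RTerm R n → RTerm R n
  | neg : RTerm R n → RTerm R n
  | mul : RTerm R n → RTerm R n → RTerm R n

def RTerm.eval {R : Type} [NonUnitalRing R] {n : ℕ} (v : Fin n → R) : RTerm R n → R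
  | .var i => v i
  | .const a => a
  | .zero => 0
  | .add t s => t.eval v + s.eval v
  | .neg t => - t.eval v
  | .mul t s => t.eval v * s.eval v

/-- The solution set of a system of ring equations with constants. -/
def SolSet {R : Type} [NonUnitalRing R] {n : ℕ} (S : Set (RTerm R n × RTerm R n)) :
    Set (Fin n → R) :=
  {v | ∀ e ∈ S, e.1.eval v = e.2.eval v}

/-!
When all products vanish, every term evaluates to `∑ i, cᵢ • xᵢ + a` with `c ∈ ℤⁿ` and `a ∈ R`,
so an equation says that the `ℤ`-linear map `c ↦ ∑ i, cᵢ • vᵢ` takes a prescribed value at a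
prescribed vector of `ℤⁿ`. Since `ℤⁿ` is Noetherian, the span of the coefficient vectors of the
system is spanned by those of a finite subsystem `S₀`, on which the maps of any two solutions of `S₀`
then agree. So either every solution of `S₀` solves the whole system, or one equation of the system
fails at some solution of `S₀`, hence at all of them, and adding it to `S₀` gives a finite
subsystem without solutions, like the whole system.
-/

section LinearSystem

variable {K M N ι : Type*} [Semiring K] [AddCommMonoid M] [AddCommMonoid N] [Module K M]
  [Module K N]

theorem Submodule.exists_finite_subset_span_image_eq [IsNoetherian K M] (m : ι → M)
    (S : Set ι) : ∃ S₀ ⊆ S, S₀.Finite ∧ span K (m '' S₀) = span K (m '' S) := by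
  obtain ⟨s, hsS, hspan⟩ :=
    (fg_span_iff_fg_span_finset_subset (m '' S)).1
      (IsNoetherian.noetherian (span K (m '' S)))
  exact Set.exists_subset_image_finite_and (p := fun t => span K t = span K (m '' S)).1
    ⟨s, hsS, s.finite_toSet, hspan.symm⟩

theorem LinearMap.eqOn_span_image_of_forall_apply_eq {S : Set ι} {m : ι → M} {a : ι → N}
    {f g : M →ₗ[K] N} (hf : ∀ i ∈ S, f (m i) = a i) (hg : ∀ i ∈ S, g (m i) = a i) :
    Set.EqOn f g (Submodule.span K (m '' S)) := by
  refine fun x hx => LinearMap.eqOn_span ?_ hx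
  rintro _ ⟨i, hi, rfl⟩
  rw [hf i hi, hg i hi]

theorem LinearMap.exists_finite_subset_forall_apply_eq_iff [IsNoetherian K M] (m : ι → M)
    (a : ι → N) (S : Set ι) : ∃ S₀ ⊆ S, S₀.Finite ∧
      ∀ f : M →ₗ[K] N, (∀ i ∈ S₀, f (m i) = a i) ↔ ∀ i ∈ S, f (m i) = a i := by
  obtain ⟨S₀, hS₀S, hS₀, hspan⟩ := Submodule.exists_finite_subset_span_image_eq (K := K) m S
  by_cases hsolves : ∀ f : M →ₗ[K] N, (∀ i ∈ S₀, f (m i) = a i) → ∀ i ∈ S, f (m i) = a i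
  · exact ⟨S₀, hS₀S, hS₀, fun f => ⟨hsolves f, fun hf i hi => hf i (hS₀S hi)⟩⟩
  push Not at hsolves
  obtain ⟨g, hg, j, hjS, hgj⟩ := hsolves
  refine ⟨insert j S₀, Set.insert_subset hjS hS₀S, hS₀.insert j, fun f => ⟨fun hf => ?_,
    fun hf i hi => hf i (Set.insert_subset hjS hS₀S hi)⟩⟩
  have hfg : f (m j) = g (m j) :=
    eqOn_span_image_of_forall_apply_eq (fun i hi => hf i (Set.mem_insert_of_mem j hi)) hg
      (hspan ▸ Submodule.subset_span ⟨j, hjS, rfl⟩)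
  exact absurd (hfg ▸ hf j (Set.mem_insert j S₀)) hgj

end LinearSystem

namespace RTerm

variable {R : Type} {n : ℕ}

def linCoeff : RTerm R n → (Fin n → ℤ)
  | .var i => Pi.single i 1
  | .const _ => 0
  | .zero => 0
  | .add t s => t.linCoeff + s.linCoeff
  | .neg t => - t.linCoeff
  | .mul _ _ => 0

def constPart [AddGroup R] : RTerm R n → R
  | .var _ => 0
  | .const a => a
  | .zero => 0
  | .add t s => t.constPart + s.constPart
  | .neg t => - t.constPart
  | .mul _ _ => 0

variable [NonUnitalRing R]

theorem eval_eq_linearCombination_add (hz : ∀ a b : R, a * b = 0) (v : Fin n → R)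
    (t : RTerm R n) : t.eval v = Fintype.linearCombination ℤ v t.linCoeff + t.constPart := by
  induction t with
  | var i => simp [eval, linCoeff, constPart]
  | const a => simp [eval, linCoeff, constPart]
  | zero => simp [eval, linCoeff, constPart]
  | add t s ht hs => simp only [eval, linCoeff, constPart, ht, hs, map_add]; abel
  | neg t ht => simp only [eval, linCoeff, constPart, ht, map_neg]; abel
  | mul t s _ _ => simp [eval, linCoeff, constPart, hz]

theorem eval_eq_eval_iff (hz : ∀ a b : R, a * b = 0) (v : Fin n → R) (t s : RTerm R n) :
    t.eval v = s.eval v ↔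
      Fintype.linearCombination ℤ v (t.linCoeff - s.linCoeff) = s.constPart - t.constPart := by
  rw [eval_eq_linearCombination_add hz, eval_eq_linearCombination_add hz, map_sub,
    sub_eq_sub_iff_add_eq_add, add_comm s.constPart]

end RTerm

/-- Every ring with zero multiplication is equationally Noetherian: every system
of equations with constants, in finitely many variables, is equivalent over `R`
to a finite subsystem. -/
theorem ring_zero_mul_equationally_noetherian {R : Type} [NonUnitalRing R]
    (hz : ∀ a b : R, a * b = 0) (n : ℕ) (S : Set (RTerm R n × RTerm R n)) :
    ∃ S' ⊆ S, S'.Finite ∧ SolSet S' = SolSet S := by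
  obtain ⟨S₀, hS₀S, hS₀, hsol⟩ := LinearMap.exists_finite_subset_forall_apply_eq_iff (K := ℤ)
    (fun e : RTerm R n × RTerm R n => e.1.linCoeff - e.2.linCoeff)
    (fun e => e.2.constPart - e.1.constPart) S
  refine ⟨S₀, hS₀S, hS₀, Set.ext fun v => ?_⟩
  simpa only [SolSet, Set.mem_ofPred_eq, RTerm.eval_eq_eval_iff hz v]
    using hsol (Fintype.linearCombination ℤ v)
end

section
/- Let R be a ring with nonzero multiplication (there exist α, β ∈ R with αβ ≠ 0). Then the restricted direct power R^(∞) is not q-compact: there is a system S of equations with constants from R^(∞) in two variables x, y such that every solution of S satisfies xy = 0, but for every finite subsystem S' ⊆ S there is a solution of S' with xy ≠ 0. -/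
/-- The restricted direct power `R^(∞)`: the subring of the countable direct power
consisting of sequences with finite support. -/
def ringRestrictedPower (R : Type) [NonUnitalRing R] : NonUnitalSubring (ℕ → R) where
  carrier := {f | {i | f i ≠ 0}.Finite}
  zero_mem' := by simp
  add_mem' := by
    intro f g hf hg
    apply (Set.Finite.union hf hg).subset
    intro i hi
    by_contra h
    simp only [Set.mem_union, Set.mem_setOf_eq, not_or, not_not] at h
    exact hi (show (f + g) i = 0 by simp [h.1, h.2])
  neg_mem' := by
    intro f hf
    apply hf.subset
    intro i hi
    simp only [Set.mem_setOf_eq, Pi.neg_apply, ne_eq, neg_eq_zero] at hi ⊢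
    exact hi
  mul_mem' := by
    intro f g hf hg
    apply hf.subset
    intro i hi
    simp only [Set.mem_setOf_eq] at hi ⊢
    intro h
    exact hi (show (f * g) i = 0 by simp [h])

/-- The equation `x · y = 0` in two variables. -/
def mulZeroEq (H : Type) [NonUnitalRing H] : RTerm H 2 × RTerm H 2 :=
  (.mul (.var 0) (.var 1), .zero)

lemma Set.Finite.exists_finset_subset_image {α β : Type*} {f : α → β} {S : Set β}
    (hS : S.Finite) (h : S ⊆ Set.range f) : ∃ T : Finset α, S ⊆ f '' T := by
  obtain ⟨T, -, hT, hST⟩ :=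
    Set.exists_subset_image_finite_and (p := (S ⊆ ·)).1 ⟨S, Set.image_univ ▸ h, hS, subset_rfl⟩
  exact ⟨hT.toFinset, by simpa using hST⟩

namespace ringRestrictedPower

variable {R : Type} [NonUnitalRing R]

noncomputable def indicator (F : Finset ℕ) (r : R) : ringRestrictedPower R :=
  ⟨(F : Set ℕ).indicator fun _ => r, F.finite_toSet.subset (Set.support_indicator_subset)⟩

lemma coe_indicator (F : Finset ℕ) (r : R) :
    (indicator F r : ℕ → R) = (F : Set ℕ).indicator fun _ => r := rfl

lemma indicator_mul_indicator (F G : Finset ℕ) (a b : R) :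
    indicator F a * indicator G b = indicator (F ∩ G) (a * b) := by
  ext i
  simp only [NonUnitalSubring.val_mul, Pi.mul_apply, coe_indicator, Set.indicator_apply,
    Finset.coe_inter, Set.mem_inter_iff, Finset.mem_coe]
  split_ifs <;> simp_all

lemma indicator_ne_zero {F : Finset ℕ} (hF : F.Nonempty) {r : R} (hr : r ≠ 0) :
    indicator F r ≠ 0 := by
  obtain ⟨i, hi⟩ := hF
  intro h
  have := congrFun (congrArg Subtype.val h) i
  simp [coe_indicator, hi, hr] at this

lemma exists_apply_eq_zero (x : ringRestrictedPower R) : ∃ i, (x : ℕ → R) i = 0 := by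
  obtain ⟨i, hi⟩ := (Set.Finite.infinite_compl x.2).nonempty
  exact ⟨i, not_not.1 hi⟩

end ringRestrictedPower

open ringRestrictedPower

lemma mem_solSet_mulZeroEq {H : Type} [NonUnitalRing H] (x y : H) :
    ![x, y] ∈ SolSet {mulZeroEq H} ↔ x * y = 0 := by
  simp [SolSet, mulZeroEq, RTerm.eval]

section DeltaSystem

variable {R : Type} [NonUnitalRing R]

noncomputable def deltaEquation (a b : R) (m : ℕ) :
    RTerm (ringRestrictedPower R) 2 × RTerm (ringRestrictedPower R) 2 :=
  (.mul (.var 0) (.const (indicator {m} b)), .const (indicator {m} (a * b)))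

lemma solSet_range_deltaEquation {a b : R} (hab : a * b ≠ 0) :
    SolSet (Set.range (deltaEquation a b)) = ∅ := by
  refine Set.eq_empty_of_forall_notMem fun v hv => ?_
  obtain ⟨m, hm⟩ := exists_apply_eq_zero (v 0)
  have hcoord := congrFun (congrArg Subtype.val (hv _ ⟨m, rfl⟩)) m
  simp only [deltaEquation, RTerm.eval, NonUnitalSubring.val_mul, Pi.mul_apply, coe_indicator,
    Finset.coe_singleton, Set.indicator_singleton, Pi.single_eq_same, hm, zero_mul] at hcoord
  exact hab hcoord.symm

lemma indicator_mem_solSet_of_subset_image {a b : R} {T : Finset ℕ}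
    {S : Set (RTerm (ringRestrictedPower R) 2 × RTerm (ringRestrictedPower R) 2)}
    (hS : S ⊆ deltaEquation a b '' T) (y : ringRestrictedPower R) :
    ![indicator T a, y] ∈ SolSet S := by
  rintro _ he
  obtain ⟨m, hm, rfl⟩ := hS he
  simp [deltaEquation, RTerm.eval, indicator_mul_indicator, Finset.inter_singleton_of_mem hm]

end DeltaSystem

/-- For a ring `R` with nonzero multiplication, the restricted direct power `R^(∞)` is
not q-compact: there is a system `S` of equations with constants, in two variables,
every solution of which satisfies `xy = 0`, while every finite subsystem of `S` has a
solution with `xy ≠ 0`. -/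
theorem ring_restricted_power_not_qcompact {R : Type} [NonUnitalRing R]
    (hnz : ∃ a b : R, a * b ≠ 0) :
    ∃ S : Set (RTerm (ringRestrictedPower R) 2 × RTerm (ringRestrictedPower R) 2),
      SolSet S ⊆ SolSet {mulZeroEq (ringRestrictedPower R)} ∧
      ∀ S' ⊆ S, S'.Finite →
        ∃ v, v ∈ SolSet S' ∧ v ∉ SolSet {mulZeroEq (ringRestrictedPower R)} := by
  obtain ⟨a, b, hab⟩ := hnz
  refine ⟨Set.range (deltaEquation a b), by simp [solSet_range_deltaEquation hab],
    fun S' hS' hfin => ?_⟩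
  obtain ⟨T, hT⟩ := hfin.exists_finset_subset_image hS'
  refine ⟨![indicator (insert 0 T) a, indicator (insert 0 T) b],
    indicator_mem_solSet_of_subset_image (hT.trans (Set.image_mono (by simp))) _, ?_⟩
  rw [mem_solSet_mulZeroEq, indicator_mul_indicator, Finset.inter_self]
  exact indicator_ne_zero (Finset.insert_nonempty _ _) hab
end

section
/- Let L_2 = {0, 1} be the two-element meet-semilattice (with 0·0 = 0·1 = 1·0 = 0 and 1·1 = 1), and let L_2^∞ be its countable direct power. The system of equations S = { x · c_n = x : n ≥ 0 }, where c_n is the sequence with 0 in the first n coordinates and 1 elsewhere, has solution set exactly {(0,0,0,...)} in L_2^∞, but for every n the solution set of the first n equations of S is the set of all sequences whose first n coordinates are 0. In particular, S is not equivalent over L_2^∞ to any finite subsystem, so L_2^∞ is not equationally Noetherian. -/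
/-!
The equation `x · c_n = x` says exactly that `x` vanishes on the first `n` coordinates, so the
solution sets of the equations form a decreasing chain with intersection `{0}`. A finite
subsystem only involves indices below some `M`, and then `c_M ≠ 0` solves it.
-/

/-- The constant sequence `c_n` of the two-element semilattice `L₂ = {0, 1}`
(modelled as `Bool` with `·` = `&&` = min), with `0` (`false`) in the first `n`
coordinates and `1` (`true`) elsewhere. -/
def c (n : ℕ) : ℕ → Bool := fun i => if i < n then false else true

/-- The `n`-th equation `x · c_n = x` of the system `S`, as a predicate on `L₂^∞`. -/
def Eqn (n : ℕ) (v : ℕ → Bool) : Prop := ∀ i, (v i && c n i) = v i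

theorem eqn_iff {n : ℕ} {v : ℕ → Bool} : Eqn n v ↔ ∀ i < n, v i = false := by
  refine forall_congr' fun i => ?_
  by_cases hi : i < n <;> simp [c, hi]

theorem Eqn.mono {m n : ℕ} {v : ℕ → Bool} (hmn : m ≤ n) (h : Eqn n v) : Eqn m v :=
  eqn_iff.2 fun i hi => eqn_iff.1 h i (hi.trans_le hmn)

theorem eqn_c_iff {m n : ℕ} : Eqn n (c m) ↔ n ≤ m := by
  rw [eqn_iff]
  refine ⟨fun h => ?_, fun h i hi => by simp [c, hi.trans_le h]⟩
  by_contra! hmn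
  simpa [c] using h m hmn

theorem forall_eqn_iff {v : ℕ → Bool} : (∀ n, Eqn n v) ↔ v = fun _ => false :=
  ⟨fun h => funext fun i => eqn_iff.1 (h (i + 1)) i i.lt_succ_self,
    fun h _ => eqn_iff.2 fun i _ => congrFun h i⟩

theorem forall_eqn_of_le_iff {n : ℕ} {v : ℕ → Bool} :
    (∀ m, 1 ≤ m → m ≤ n → Eqn m v) ↔ Eqn n v := by
  refine ⟨fun h => ?_, fun h m _ hmn => h.mono hmn⟩
  rcases n.eq_zero_or_pos with rfl | hn
  · exact eqn_iff.2 fun i hi => absurd hi i.not_lt_zero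
  · exact h n hn le_rfl

/-- Over the countable direct power `L₂^∞` of the two-element semilattice, the system
`S = {x · c_n = x : n ≥ 0}` has solution set exactly `{(0,0,0,...)}`, the first `n`
equations (`c_1, ..., c_n`) have solution set the sequences vanishing in the first `n`
coordinates, and `S` is not equivalent to any finite subsystem; so `L₂^∞` is not
equationally Noetherian. -/
theorem L2_power_not_equationally_noetherian :
    ({v : ℕ → Bool | ∀ n, Eqn n v} = {fun _ => false}) ∧
    (∀ n : ℕ, {v : ℕ → Bool | ∀ m, 1 ≤ m → m ≤ n → Eqn m v} =
      {v : ℕ → Bool | ∀ i < n, v i = false}) ∧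
    (∀ N : Set ℕ, N.Finite →
      {v : ℕ → Bool | ∀ n ∈ N, Eqn n v} ≠ {v : ℕ → Bool | ∀ n, Eqn n v}) := by
  refine ⟨Set.ext fun v => forall_eqn_iff,
    fun n => Set.ext fun v => forall_eqn_of_le_iff.trans eqn_iff, fun N hN hEq => ?_⟩
  obtain ⟨M, hM⟩ := hN.bddAbove
  have hsolves : c M ∈ {v : ℕ → Bool | ∀ n ∈ N, Eqn n v} := fun n hn => eqn_c_iff.2 (hM hn)
  rw [hEq] at hsolves
  exact M.not_succ_le_self (eqn_c_iff.1 (hsolves (M + 1)))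
end

section
/- Let V be a variety of rings. Every ring in V is equationally Noetherian (with constants) if and only if every ring in V has zero multiplication. -/
/-- A ring is equationally Noetherian if every system of ring equations with constants,
in finitely many variables, is equivalent to a finite subsystem. -/
def EquationallyNoetherian (R : Type) [NonUnitalRing R] : Prop :=
  ∀ (n : ℕ) (S : Set (RTerm R n × RTerm R n)),
    ∃ S' ⊆ S, S'.Finite ∧ SolSet S' = SolSet S

/-! ### Auxiliary machinery for the "zero multiplication ⇒ equationally Noetherian" direction -/

section Aux

variable {R : Type} [NonUnitalRing R] {n : ℕ}

/-- The linear (integer) coefficients of a term, valid in zero-multiplication rings. -/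
def RTerm.coef : RTerm R n → (Fin n → ℤ)
  | .var i => Pi.single i 1
  | .const _ => 0
  | .zero => 0
  | .add t s => t.coef + s.coef
  | .neg t => -t.coef
  | .mul _ _ => 0

/-- The constant part of a term, valid in zero-multiplication rings. -/
def RTerm.cst : RTerm R n → R
  | .var _ => 0
  | .const a => a
  | .zero => 0
  | .add t s => t.cst + s.cst
  | .neg t => -t.cst
  | .mul _ _ => 0

lemma RTerm.eval_eq_lin (hz : ∀ a b : R, a * b = 0) (v : Fin n → R) :
    ∀ t : RTerm R n, t.eval v = (∑ i, t.coef i • v i) + t.cst := by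
  intro t
  induction t with
  | var i =>
      simp [eval, coef, cst, Pi.single_apply, ite_smul]
  | const a => simp [eval, coef, cst]
  | zero => simp [eval, coef, cst]
  | add t s ht hs =>
      simp only [eval, coef, cst, ht, hs, Pi.add_apply, add_smul, Finset.sum_add_distrib]
      abel
  | neg t ht =>
      simp only [eval, coef, cst, ht, Pi.neg_apply, neg_smul, Finset.sum_neg_distrib]
      abel
  | mul t s _ _ =>
      simp [eval, coef, cst, hz]

/-- The coefficient vector of an equation. -/
def Deq (e : RTerm R n × RTerm R n) : Fin n → ℤ := e.1.coef - e.2.coef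

/-- The constant of an equation. -/
def Ceq (e : RTerm R n × RTerm R n) : R := e.2.cst - e.1.cst

lemma sat_iff (hz : ∀ a b : R, a * b = 0) (v : Fin n → R) (e : RTerm R n × RTerm R n) :
    e.1.eval v = e.2.eval v ↔ (∑ i, Deq e i • v i) = Ceq e := by
  rw [RTerm.eval_eq_lin hz, RTerm.eval_eq_lin hz]
  simp only [Deq, Ceq, Pi.sub_apply, sub_smul, Finset.sum_sub_distrib]
  rw [sub_eq_sub_iff_add_eq_add, add_comm (RTerm.cst e.2)]

lemma sum_smul_eq_of_mem_span (v w : Fin n → R)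
    (T : Set (RTerm R n × RTerm R n))
    (hv : ∀ e ∈ T, (∑ i, Deq e i • v i) = Ceq e)
    (hw : ∀ e ∈ T, (∑ i, Deq e i • w i) = Ceq e)
    {c : Fin n → ℤ} (hc : c ∈ Submodule.span ℤ (Deq '' T)) :
    (∑ i, c i • v i) = ∑ i, c i • w i := by
  let ρ : (Fin n → ℤ) →ₗ[ℤ] R :=
    { toFun := fun c => ∑ i, c i • (v i - w i)
      map_add' := by
        intro x y
        simp [add_smul, Finset.sum_add_distrib]
      map_smul' := by
        intro m x
        simp [mul_smul, Finset.smul_sum] }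
  have hker : Submodule.span ℤ (Deq '' T) ≤ LinearMap.ker ρ := by
    rw [Submodule.span_le]
    rintro _ ⟨e, he, rfl⟩
    have : (∑ i, Deq e i • (v i - w i)) = 0 := by
      simp only [smul_sub, Finset.sum_sub_distrib, hv e he, hw e he, sub_self]
    simpa [ρ, LinearMap.mem_ker] using this
  have h0 : (∑ i, c i • (v i - w i)) = 0 := by
    simpa [ρ, LinearMap.mem_ker] using hker hc
  have h1 : (∑ i, c i • v i) - (∑ i, c i • w i) = 0 := by
    simpa [smul_sub, Finset.sum_sub_distrib] using h0
  exact sub_eq_zero.mp h1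

set_option maxHeartbeats 1000000 in
lemma zeroMul_equationallyNoetherian (R : Type) [NonUnitalRing R]
    (hz : ∀ a b : R, a * b = 0) : EquationallyNoetherian R := by
  intro n S
  classical
  have hmaximal := set_has_maximal_iff_noetherian.mpr
    (inferInstance : IsNoetherian ℤ (Fin n → ℤ))
    {N : Submodule ℤ (Fin n → ℤ) | ∃ F : Finset (RTerm R n × RTerm R n), ↑F ⊆ S ∧
      N = Submodule.span ℤ (Deq '' (↑F : Set (RTerm R n × RTerm R n)))}
    ⟨_, ∅, by simp, rfl⟩
  obtain ⟨N, hNmem, hmax⟩ := hmaximal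
  obtain ⟨F₀, hF₀S, rfl⟩ := hNmem
  have key : ∀ e ∈ S, Deq e ∈ Submodule.span ℤ (Deq '' (↑F₀ : Set (RTerm R n × RTerm R n))) := by
    intro e he
    by_contra hmem
    have hsub : (↑F₀ : Set (RTerm R n × RTerm R n)) ⊆ ↑(insert e F₀) := by simp
    have hlt : Submodule.span ℤ (Deq '' (↑F₀ : Set (RTerm R n × RTerm R n))) <
        Submodule.span ℤ (Deq '' (↑(insert e F₀) : Set (RTerm R n × RTerm R n))) := by
      refine lt_of_le_of_ne (Submodule.span_mono (Set.image_mono hsub)) ?_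
      intro heq
      exact hmem (heq ▸ Submodule.subset_span ⟨e, by simp, rfl⟩)
    exact hmax _ ⟨insert e F₀, by
      rw [Finset.coe_insert]; exact Set.insert_subset he hF₀S, rfl⟩ hlt
  -- translation of membership in solution sets
  have hsol : ∀ (T : Set (RTerm R n × RTerm R n)) (v : Fin n → R),
      v ∈ SolSet T ↔ ∀ e ∈ T, (∑ i, Deq e i • v i) = Ceq e := by
    intro T v
    constructor
    · intro hv e he; exact (sat_iff hz v e).1 (hv e he)
    · intro hv e he; exact (sat_iff hz v e).2 (hv e he)
  rcases Set.eq_empty_or_nonempty (SolSet S) with hS | ⟨v₀, hv₀⟩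
  · rcases Set.eq_empty_or_nonempty (SolSet (↑F₀ : Set (RTerm R n × RTerm R n))) with hF | ⟨v, hv⟩
    · exact ⟨↑F₀, hF₀S, F₀.finite_toSet, by rw [hF, hS]⟩
    · have hvS : v ∉ SolSet S := by rw [hS]; exact Set.notMem_empty v
      have : ∃ e ∈ S, ¬ e.1.eval v = e.2.eval v := by
        by_contra h
        push_neg at h
        exact hvS h
      obtain ⟨e, he, hneq⟩ := this
      refine ⟨insert e (↑F₀ : Set (RTerm R n × RTerm R n)), Set.insert_subset he hF₀S,
        (F₀.finite_toSet).insert e, ?_⟩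
      rw [hS]
      rw [Set.eq_empty_iff_forall_notMem]
      intro w hw
      have hwF : w ∈ SolSet (↑F₀ : Set (RTerm R n × RTerm R n)) := by
        intro e' he'; exact hw e' (Set.mem_insert_of_mem _ he')
      have hwe : (∑ i, Deq e i • w i) = Ceq e :=
        (sat_iff hz w e).1 (hw e (Set.mem_insert e _))
      have := sum_smul_eq_of_mem_span v w (↑F₀ : Set (RTerm R n × RTerm R n))
        ((hsol _ v).1 hv) ((hsol _ w).1 hwF) (key e he)
      exact hneq ((sat_iff hz v e).2 (this.trans hwe))
  · refine ⟨↑F₀, hF₀S, F₀.finite_toSet, Set.Subset.antisymm ?_ ?_⟩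
    · intro v hv e he
      have hv₀F : v₀ ∈ SolSet (↑F₀ : Set (RTerm R n × RTerm R n)) := by
        intro e' he'; exact hv₀ e' (hF₀S he')
      have := sum_smul_eq_of_mem_span v v₀ (↑F₀ : Set (RTerm R n × RTerm R n))
        ((hsol _ v).1 hv) ((hsol _ v₀).1 hv₀F) (key e he)
      exact (sat_iff hz v e).2 (this.trans ((sat_iff hz v₀ e).1 (hv₀ e he)))
    · intro v hv e he
      exact hv e (hF₀S he)

end Aux

/-- For a variety `V` of (not necessarily unital or commutative) rings — a class closed
under subrings, homomorphic images and arbitrary direct products — every ring in `V`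
is equationally Noetherian (with constants) iff every ring in `V` has zero
multiplication. -/
theorem ring_variety_noetherian_iff_zero_mul
    (V : (R : Type) → NonUnitalRing R → Prop)
    (hsub : ∀ (R : Type) [iR : NonUnitalRing R], V R iR →
      ∀ S : NonUnitalSubring R, V S inferInstance)
    (hquot : ∀ (R S : Type) [iR : NonUnitalRing R] [iS : NonUnitalRing S] (f : R →ₙ+* S),
      Function.Surjective f → V R iR → V S iS)
    (hprod : ∀ (ι : Type) (R : ι → Type) [iR : ∀ i, NonUnitalRing (R i)],
      (∀ i, V (R i) (iR i)) → V (∀ i, R i) inferInstance) :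
    (∀ (R : Type) [iR : NonUnitalRing R], V R iR → EquationallyNoetherian R) ↔
    (∀ (R : Type) [iR : NonUnitalRing R], V R iR → ∀ a b : R, a * b = 0) := by
  constructor
  · intro hEN R iR hR a b
    by_contra hab
    have hbne : b ≠ 0 := fun h => hab (by simp [h])
    have hVP : V (ℕ → R) inferInstance := hprod ℕ (fun _ => R) (fun _ => hR)
    have hP := hEN (ℕ → R) hVP
    classical
    set f : ℕ → RTerm (ℕ → R) 1 × RTerm (ℕ → R) 1 :=
      fun k => (RTerm.mul (RTerm.var 0) (RTerm.const (Pi.single k b)), RTerm.zero) with hf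
    obtain ⟨S', hS'sub, hS'fin, hS'sol⟩ := hP 1 (Set.range f)
    have hfinj : Function.Injective f := by
      intro k l hkl
      simp only [hf, Prod.mk.injEq, RTerm.mul.injEq, RTerm.const.injEq] at hkl
      by_contra hne
      have := congrFun hkl.1.2 k
      rw [Pi.single_eq_same, Pi.single_eq_of_ne hne] at this
      exact hbne this
    have hKfin : (f ⁻¹' S').Finite := hS'fin.preimage hfinj.injOn
    obtain ⟨m, hm⟩ := (hKfin.infinite_compl).nonempty
    set w : Fin 1 → (ℕ → R) := fun _ => Pi.single m a with hw
    have hwS' : w ∈ SolSet S' := by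
      intro e he
      obtain ⟨k, rfl⟩ := hS'sub he
      have hkm : k ≠ m := by
        intro h
        exact hm (by rw [← h]; exact he)
      simp only [hf, RTerm.eval, hw]
      funext j
      by_cases hj : j = m
      · subst hj
        rw [Pi.mul_apply, Pi.single_eq_of_ne hkm.symm]
        simp
      · rw [Pi.mul_apply, Pi.single_eq_of_ne hj]
        simp
    have hwS : w ∈ SolSet (Set.range f) := hS'sol ▸ hwS'
    have := hwS (f m) ⟨m, rfl⟩
    simp only [hf, RTerm.eval, hw] at this
    exact hab (by simpa using congrFun this m)
  · intro hzm R iR hR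
    exact zeroMul_equationallyNoetherian R (hzm R hR)
end

section
/- Let V be a variety of groups such that every group in V is equationally Noetherian with respect to coefficient-free equations (in the pure group language), and let W be a subvariety of V that can be defined inside V by identities in a fixed finite set of variables X. Then W can be defined inside V by finitely many identities. -/
/-- A group `G` is coefficient-free equationally Noetherian (1-equationally
Noetherian): every system of coefficient-free group equations in finitely many
variables (elements of a free group, regarded as equations `w = 1`) is equivalent
over `G` to a finite subsystem. -/
def CFEquationallyNoetherian (G : Type) [Group G] : Prop :=
  ∀ (n : ℕ) (S : Set (FreeGroup (Fin n))),
    ∃ S' ⊆ S, S'.Finite ∧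
      {v : Fin n → G | ∀ w ∈ S', FreeGroup.lift v w = 1} =
      {v : Fin n → G | ∀ w ∈ S, FreeGroup.lift v w = 1}

/-- Let `V` be a variety of groups (closed under subgroups, homomorphic images and
arbitrary direct products) all of whose members are equationally Noetherian with
respect to coefficient-free equations, and let `W` be a subvariety of `V` definable
inside `V` by a set `R` of identities in a fixed finite set of variables
(`k` variables). Then `W` is relatively finitely based: it is definable inside `V`
by finitely many identities. -/
theorem subvariety_relatively_finitely_based
    (V W : (G : Type) → Group G → Prop)
    (hsub : ∀ (G : Type) [iG : Group G], V G iG → ∀ H : Subgroup G, V H inferInstance)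
    (hquot : ∀ (G H : Type) [iG : Group G] [iH : Group H] (f : G →* H),
      Function.Surjective f → V G iG → V H iH)
    (hprod : ∀ (ι : Type) (G : ι → Type) [iG : ∀ i, Group (G i)],
      (∀ i, V (G i) (iG i)) → V (∀ i, G i) inferInstance)
    (hN : ∀ (G : Type) [iG : Group G], V G iG → CFEquationallyNoetherian G)
    (hWV : ∀ (G : Type) [iG : Group G], W G iG → V G iG)
    (k : ℕ) (R : Set (FreeGroup (Fin k)))
    (hdef : ∀ (G : Type) [iG : Group G], V G iG →
      (W G iG ↔ ∀ u ∈ R, ∀ v : Fin k → G, FreeGroup.lift v u = 1)) :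
    ∃ Rf : Set (FreeGroup (Fin k)), Rf.Finite ∧
      ∀ (G : Type) [iG : Group G], V G iG →
        (W G iG ↔ ∀ u ∈ Rf, ∀ v : Fin k → G, FreeGroup.lift v u = 1) := by
  classical
  -- the "good" normal subgroups: those whose quotient lies in `V`
  let F := FreeGroup (Fin k)
  let Good : Subgroup F → Prop := fun N =>
    ∃ hn : N.Normal, V (F ⧸ N) (@QuotientGroup.Quotient.group F _ N hn)
  let ι := {N : Subgroup F // Good N}
  haveI instNorm : ∀ N : ι, N.1.Normal := fun N => N.2.choose
  let Gi : ι → Type := fun N => F ⧸ N.1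
  -- the product of all `k`-generated "models" of `V`
  let P := ∀ N : ι, Gi N
  have hVP : V P inferInstance := hprod ι Gi (fun N => N.2.choose_spec)
  obtain ⟨S', hS'R, hS'fin, hSeq⟩ := hN P hVP k R
  refine ⟨S', hS'fin, ?_⟩
  intro G iG hVG
  rw [hdef G hVG]
  constructor
  · intro hR u hu v; exact hR u (hS'R hu) v
  · intro hS u hu v
    -- from the identities `S'` holding in `G`, deduce all of `R` holds in `G`
    set φ : F →* G := FreeGroup.lift v with hφ
    set N : Subgroup F := φ.ker with hNdef
    have hGoodN : Good N := by
      refine ⟨inferInstance, ?_⟩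
      have hrange : V φ.range inferInstance := hsub G hVG φ.range
      exact hquot (φ.range) (F ⧸ N)
        (QuotientGroup.quotientKerEquivRange φ).symm.toMonoidHom
        (QuotientGroup.quotientKerEquivRange φ).symm.surjective hrange
    let nN : ι := ⟨N, hGoodN⟩
    -- the valuation in the big product: image of generators at coordinate `nN`, 1 else
    let p : Fin k → P := fun i M =>
      if M.1 = N then (QuotientGroup.mk (FreeGroup.of i) : F ⧸ M.1) else 1
    have key : ∀ M : ι,
        (Pi.evalMonoidHom Gi M).comp (FreeGroup.lift p) = FreeGroup.lift (fun i => p i M) :=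
      fun M => FreeGroup.ext_hom _ _ (fun i => by simp)
    have hcoord : ∀ (w : F) (M : ι),
        FreeGroup.lift p w M = FreeGroup.lift (fun i => p i M) w :=
      fun w M => DFunLike.congr_fun (key M) w
    -- the crucial equivalence: `p` solves `w = 1` iff `v` does
    have hval : ∀ w : F, FreeGroup.lift p w = 1 ↔ FreeGroup.lift v w = 1 := by
      intro w
      have hmk : ∀ M : ι, M.1 = N →
          FreeGroup.lift (fun i => p i M) w = QuotientGroup.mk w := by
        intro M hM
        have : FreeGroup.lift (fun i => p i M) = QuotientGroup.mk' M.1 :=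
          FreeGroup.ext_hom _ _ (fun i => by
            simp only [FreeGroup.lift_apply_of]
            show (if (M : Subgroup F) = N then (QuotientGroup.mk (FreeGroup.of i) : F ⧸ (M : Subgroup F)) else 1) = _
            rw [if_pos hM]; rfl)
        exact DFunLike.congr_fun this w
      constructor
      · intro h
        have h1 := congrFun h nN
        rw [hcoord, hmk nN rfl] at h1
        have hmem : w ∈ N := (QuotientGroup.eq_one_iff w).mp h1
        exact hmem
      · intro h
        funext M
        show FreeGroup.lift p w M = 1
        rw [hcoord]
        by_cases hM : M.1 = N
        · rw [hmk M hM]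
          have hmem : w ∈ M.1 := by rw [hM]; exact h
          exact (QuotientGroup.eq_one_iff w).mpr hmem
        · have : FreeGroup.lift (fun i => p i M) = (1 : F →* Gi M) :=
            FreeGroup.ext_hom _ _ (fun i => by simp [p, hM])
          simpa using DFunLike.congr_fun this w
    -- `p` solves all of `S'`, hence all of `R`, hence `v` solves `u`
    have hpS' : p ∈ {q : Fin k → P | ∀ w ∈ S', FreeGroup.lift q w = 1} := by
      intro w hw
      exact (hval w).mpr (hS w hw v)
    rw [hSeq] at hpS'
    exact (hval u).mp (hpS' u hu)
end
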